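/- arXiv:2209.09838 — 3 statements merged into one kernel-verified Lean document; each statement's English description precedes it below -/
import Mathlib

section
/- Every extension of the argument system is deductively closed: if ℰ is an extension and ℰ ⊢ φ (classically), then φ ∈ ℰ. -/
/-! By the compactness theorem, `φ` already follows from finitely many `ψ₁, …, ψₙ ∈ ℰ`. Each `ψᵢ`
has an argument avoiding `Ω`; their union is an argument for `φ` by the combination clause of
`IsArgFor`, and its rules are the union of theirs, so it avoids `Ω` as well. -/

/-- Classical propositional formulas. -/
inductive PropForm (α : Type) : Type
  | atom : α → PropForm α
  | neg : PropForm α → PropForm α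
  | and : PropForm α → PropForm α → PropForm α
  | or : PropForm α → PropForm α → PropForm α

def PropForm.eval {α : Type} (v : α → Bool) : PropForm α → Bool
  | atom a => v a
  | neg φ => !φ.eval v
  | and φ ψ => φ.eval v && ψ.eval v
  | or φ ψ => φ.eval v || ψ.eval v

/-- Classical (semantic) consequence `Γ ⊢ φ`. -/
def Entails {α : Type} (Γ : Set (PropForm α)) (φ : PropForm α) : Prop :=
  ∀ v : α → Bool, (∀ ψ ∈ Γ, ψ.eval v = true) → φ.eval v = true

/-- A defeasible rule `φ ⤳ ψ` is a pair (antecedent, consequent). -/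
abbrev Rule (α : Type) := PropForm α × PropForm α

/-- A component `⟨A', α⟩` of an argument: either a premise pair `⟨∅, φ⟩`
or a rule pair `⟨A', φ ⤳ ψ⟩`. Arguments are (finite) sets of such pairs,
modeled as lists. -/
inductive ArgPair (α : Type) : Type
  | prem : PropForm α → ArgPair α
  | rule : List (ArgPair α) → Rule α → ArgPair α

abbrev Arg (α : Type) := List (ArgPair α)

/-- Roos's recursive definition of "A is an argument for ψ" over ⟨Σ, D⟩. -/
inductive IsArgFor {α : Type} (S : Set (PropForm α)) (D : Set (Rule α)) :
    Arg α → PropForm α → Prop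
  | prem {φ} : φ ∈ S → IsArgFor S D [ArgPair.prem φ] φ
  | combine (ps : List (Arg α × PropForm α)) {ψ} :
      (∀ q ∈ ps, IsArgFor S D q.1 q.2) →
      Entails {φ | ∃ q ∈ ps, q.2 = φ} ψ →
      IsArgFor S D (ps.map Prod.fst).flatten ψ
  | rule {A' : Arg α} {r : Rule α} : r ∈ D → IsArgFor S D A' r.1 →
      IsArgFor S D [ArgPair.rule A' r] r.2

/-- `⟨A', α⟩` is a sub-structure of the argument `B`. -/
inductive SubStruct {α : Type} : ArgPair α → Arg α → Prop
  | prem {φ : PropForm α} {B : Arg α} :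
      ArgPair.prem φ ∈ B → SubStruct (ArgPair.prem φ) B
  | rule {A' B' : Arg α} {r : Rule α} {B : Arg α} :
      ArgPair.rule B' r ∈ B → (∀ p ∈ A', SubStruct p B') →
      SubStruct (ArgPair.rule A' r) B
  | nested {p : ArgPair α} {B' : Arg α} {β : Rule α} {B : Arg α} :
      ArgPair.rule B' β ∈ B → SubStruct p B' → SubStruct p B

/-- `A` is a sub-argument of `B` (`A ≤ B`). -/
def SubArg {α : Type} (A B : Arg α) : Prop := ∀ p ∈ A, SubStruct p B

/-- The rule `r` occurs (somewhere) in the argument component `p`. -/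
inductive RuleIn {α : Type} (r : Rule α) : ArgPair α → Prop
  | here {A' : Arg α} : RuleIn r (ArgPair.rule A' r)
  | there {A' : Arg α} {r' : Rule α} {p : ArgPair α} :
      p ∈ A' → RuleIn r p → RuleIn r (ArgPair.rule A' r')

/-- The premise `φ` occurs in the argument component `p`. -/
inductive PremIn {α : Type} (φ : PropForm α) : ArgPair α → Prop
  | here : PremIn φ (ArgPair.prem φ)
  | there {A' : Arg α} {r : Rule α} {p : ArgPair α} :
      p ∈ A' → PremIn φ p → PremIn φ (ArgPair.rule A' r)

/-- `Ã`: the set of all rules used in the argument `A`. -/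
def argRules {α : Type} (A : Arg α) : Set (Rule α) := {r | ∃ p ∈ A, RuleIn r p}

/-- `Ā`: the set of all premises used in the argument `A`. -/
def argPrems {α : Type} (A : Arg α) : Set (PropForm α) := {φ | ∃ p ∈ A, PremIn φ p}

namespace PropForm

variable {α : Type}

theorem continuous_eval (φ : PropForm α) : Continuous fun v : α → Bool => φ.eval v := by
  induction φ with
  | atom a => exact continuous_apply a
  | neg φ ih => exact (continuous_of_discreteTopology (f := Bool.not)).comp ih
  | and φ ψ ih₁ ih₂ =>
    exact (continuous_of_discreteTopology (f := fun p : Bool × Bool => p.1 && p.2)).comp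
      (ih₁.prodMk ih₂)
  | or φ ψ ih₁ ih₂ =>
    exact (continuous_of_discreteTopology (f := fun p : Bool × Bool => p.1 || p.2)).comp
      (ih₁.prodMk ih₂)

theorem isClopen_setOf_eval_eq (φ : PropForm α) (b : Bool) :
    IsClopen {v : α → Bool | φ.eval v = b} :=
  (isClopen_discrete {b}).preimage φ.continuous_eval

end PropForm

section Entails

variable {α : Type}

theorem Entails.mono {Γ Δ : Set (PropForm α)} {φ : PropForm α} (h : Entails Γ φ) (hΓΔ : Γ ⊆ Δ) :
    Entails Δ φ :=
  fun v hv => h v fun ψ hψ => hv ψ (hΓΔ hψ)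

/-- Compactness theorem: the valuations falsifying `φ` form a compact subset of `α → Bool`,
covered by the open sets of valuations falsifying some member of `Γ`. -/
theorem Entails.exists_finset {Γ : Set (PropForm α)} {φ : PropForm α} (h : Entails Γ φ) :
    ∃ t : Finset (PropForm α), ↑t ⊆ Γ ∧ Entails ↑t φ := by
  have hcover : {v | φ.eval v = false} ⊆ ⋃ ψ ∈ Γ, {v | ψ.eval v = false} := by
    intro v hv
    by_contra hnot
    simp only [Set.mem_iUnion, Set.mem_ofPred_eq, Bool.not_eq_false, not_exists] at hnot
    simp [h v hnot] at hv
  obtain ⟨Γ₀, hΓ₀, hfin, hcover₀⟩ := (φ.isClopen_setOf_eval_eq false).isClosed.isCompact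
    |>.elim_finite_subcover_image (fun ψ _ => (ψ.isClopen_setOf_eval_eq false).isOpen) hcover
  refine ⟨hfin.toFinset, by simpa using hΓ₀, fun v hv => ?_⟩
  by_contra hφ
  obtain ⟨ψ, hψ, hψv⟩ := Set.mem_iUnion₂.mp (hcover₀ (Bool.not_eq_true _ ▸ hφ))
  exact Bool.false_ne_true (hψv.symm.trans (hv ψ (hfin.mem_toFinset.mpr hψ)))

end Entails

section Extension

variable {α : Type}

def extension (S : Set (PropForm α)) (D Ω : Set (Rule α)) : Set (PropForm α) :=
  {ψ | ∃ A : Arg α, IsArgFor S D A ψ ∧ argRules A ∩ Ω = ∅}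

theorem argRules_flatten (L : List (Arg α)) : argRules L.flatten = ⋃ A ∈ L, argRules A := by
  ext r
  simp only [argRules, List.mem_flatten, Set.mem_iUnion, Set.mem_ofPred_eq, exists_prop]
  exact ⟨fun ⟨p, ⟨A, hA, hp⟩, hr⟩ => ⟨A, hA, p, hp, hr⟩,
    fun ⟨A, hA, p, hp, hr⟩ => ⟨p, ⟨A, hA, hp⟩, hr⟩⟩

variable {S : Set (PropForm α)} {D Ω : Set (Rule α)}

theorem mem_extension_of_entails_finset {t : Finset (PropForm α)} {φ : PropForm α}
    (ht : ↑t ⊆ extension S D Ω) (h : Entails ↑t φ) : φ ∈ extension S D Ω := by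
  choose! A hA hAΩ using fun ψ (hψ : ψ ∈ t) => ht hψ
  let ps := t.toList.map fun ψ => (A ψ, ψ)
  refine ⟨(ps.map Prod.fst).flatten, IsArgFor.combine ps ?_ ?_, ?_⟩
  · simpa [ps] using hA
  · exact h.mono fun ψ hψ => ⟨(A ψ, ψ), List.mem_map.mpr ⟨ψ, Finset.mem_toList.mpr hψ, rfl⟩, rfl⟩
  · rw [argRules_flatten, Set.iUnion₂_inter]
    simpa [ps] using hAΩ

end Extension

/-- Every extension is deductively closed: if `ℰ` is the set of propositions
supported by arguments whose rules avoid the defeated rules `Ω`, and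
`ℰ ⊢ φ` classically, then `φ ∈ ℰ`. -/
theorem extension_deductively_closed {α : Type} (S : Set (PropForm α))
    (D : Set (Rule α)) (Ω : Set (Rule α)) (φ : PropForm α)
    (h : Entails {ψ | ∃ A : Arg α, IsArgFor S D A ψ ∧ argRules A ∩ Ω = ∅} φ) :
    ∃ A : Arg α, IsArgFor S D A φ ∧ argRules A ∩ Ω = ∅ := by
  obtain ⟨t, ht, hφ⟩ := h.exists_finset
  exact mem_extension_of_entails_finset ht hφ
end

section
/- If a JTMS with empty in-node justifications has a well-founded strict order ≺ on nodes such that for every justification (S, n) and every m ∈ S, m ≺ n, then an admissible labeling exists and is unique. -/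
/-- If the dependency structure of a JTMS (with empty in-node justifications)
is acyclic — witnessed by a well-founded order `≺` such that the out-nodes of
every justification precede its consequent — then an admissible labeling
exists and is unique. -/
theorem admissible_labeling_exists_unique {N : Type*} (J : Set (Set N × N))
    (prec : N → N → Prop) (hwf : WellFounded prec)
    (hJ : ∀ p ∈ J, ∀ m ∈ p.1, prec m p.2) :
    ∃! ℓ : N → Bool,
      ∀ n : N, ℓ n = true ↔ ∃ p ∈ J, p.2 = n ∧ ∀ m ∈ p.1, ℓ m = false := by
  classical
  set F : ∀ n : N, (∀ m, prec m n → Bool) → Bool := fun n rec =>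
    decide (∃ p, ∃ hp : p ∈ J, ∃ hpn : p.2 = n,
      ∀ m, ∀ hm : m ∈ p.1, rec m (hpn ▸ hJ p hp m hm) = false) with hF
  set ℓ : N → Bool := hwf.fix F with hℓ
  have hfix : ∀ n, ℓ n = F n (fun m _ => ℓ m) := fun n => hwf.fix_eq F n
  have hadm : ∀ n : N, ℓ n = true ↔
      ∃ p ∈ J, p.2 = n ∧ ∀ m ∈ p.1, ℓ m = false := by
    intro n
    rw [hfix n, hF]
    simp only [decide_eq_true_eq]
    constructor
    · rintro ⟨p, hp, hpn, h⟩
      exact ⟨p, hp, hpn, fun m hm => h m hm⟩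
    · rintro ⟨p, hp, hpn, h⟩
      exact ⟨p, hp, hpn, fun m hm => h m hm⟩

  refine ⟨ℓ, hadm, ?_⟩
  intro g hg
  funext n
  induction n using hwf.induction with
  | _ n ih =>
    by_cases h : g n = true
    · obtain ⟨p, hp, hpn, hfalse⟩ := (hg n).mp h
      rw [h, eq_comm, (hadm n)]
      exact ⟨p, hp, hpn, fun m hm => by
        rw [← ih m (hpn ▸ hJ p hp m hm)]; exact hfalse m hm⟩
    · simp only [Bool.not_eq_true] at h
      rw [h, eq_comm]
      rw [Bool.eq_false_iff, Ne, hadm n]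
      rintro ⟨p, hp, hpn, hfalse⟩
      rw [Bool.eq_false_iff, Ne, hg n] at h
      exact h ⟨p, hp, hpn, fun m hm => by
        rw [ih m (hpn ▸ hJ p hp m hm)]; exact hfalse m hm⟩
end

section
/- Given a minimal argument A_⊥ for an inconsistency with last rules ⃗A_⊥, removing a pair ⟨A_φ, φ ⤳ ψ⟩ ∈ A_⊥ and adding A_φ yields an argument A_{¬(φ⤳ψ)} whose premise set satisfies Ā_{¬(φ⤳ψ)} = Ā_⊥ and whose rule set satisfies Ã_{¬(φ⤳ψ)} = Ã_⊥ \ {φ ⤳ ψ} whenever φ ⤳ ψ does not occur elsewhere in A_⊥. -/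
/-! Premises and rules of an argument are collected componentwise, and the pair `⟨A_φ, r⟩`
contributes those of `A_φ` plus `r` itself. So deleting the pair and splicing in `A_φ` keeps every
premise, and loses only `r` among the rules because `r` occurs nowhere else. -/

variable {α : Type}

theorem argPrems_append (A B : Arg α) : argPrems (A ++ B) = argPrems A ∪ argPrems B := by
  ext φ
  simp only [argPrems, Set.mem_ofPred_eq, Set.mem_union, List.mem_append, or_and_right, exists_or]

theorem argRules_append (A B : Arg α) : argRules (A ++ B) = argRules A ∪ argRules B := by
  ext s
  simp only [argRules, Set.mem_ofPred_eq, Set.mem_union, List.mem_append, or_and_right, exists_or]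

theorem argPrems_singleton_rule (A' : Arg α) (r : Rule α) :
    argPrems [ArgPair.rule A' r] = argPrems A' := by
  ext φ
  constructor
  · rintro ⟨p, hp, hin⟩
    obtain rfl := List.mem_singleton.mp hp
    cases hin with
    | there hq hin' => exact ⟨_, hq, hin'⟩
  · rintro ⟨p, hp, hin⟩
    exact ⟨_, List.mem_singleton_self _, PremIn.there hp hin⟩

theorem argRules_singleton_rule (A' : Arg α) (r : Rule α) :
    argRules [ArgPair.rule A' r] = insert r (argRules A') := by
  ext s
  constructor
  · rintro ⟨p, hp, hin⟩
    obtain rfl := List.mem_singleton.mp hp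
    cases hin with
    | here => exact Set.mem_insert _ _
    | there hq hin' => exact Set.mem_insert_of_mem _ ⟨_, hq, hin'⟩
  · rintro (rfl | ⟨p, hp, hin⟩)
    · exact ⟨_, List.mem_singleton_self _, RuleIn.here⟩
    · exact ⟨_, List.mem_singleton_self _, RuleIn.there hp hin⟩

theorem undercutting_argument_prems_rules_general {α : Type} (Aφ rest : Arg α) (r : Rule α)
    (hmin : ∀ p ∈ rest, ¬ RuleIn r p)
    (hnotin : r ∉ argRules Aφ) :
    argPrems (rest ++ Aφ) = argPrems (ArgPair.rule Aφ r :: rest) ∧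
    argRules (rest ++ Aφ) = argRules (ArgPair.rule Aφ r :: rest) \ {r} := by
  rw [← List.singleton_append, argPrems_append, argPrems_append, argRules_append,
    argRules_append, argPrems_singleton_rule, argRules_singleton_rule]
  refine ⟨Set.union_comm _ _, ?_⟩
  have hrest : r ∉ argRules rest := fun ⟨p, hp, hin⟩ => hmin p hp hin
  rw [Set.insert_union, Set.insert_sdiff_self_of_notMem (by simp [hnotin, hrest]),
    Set.union_comm]

/-- Undercutting argument from a minimal argument for an inconsistency:
if `A_⊥ = ⟨A_φ, φ ⤳ ψ⟩ :: rest` is an argument for an inconsistency and the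
rule `r = φ ⤳ ψ` occurs nowhere else in `A_⊥`, then the undercutting argument
`A_{¬(φ⤳ψ)} = (A_⊥ \ {⟨A_φ, φ⤳ψ⟩}) ∪ A_φ = rest ++ A_φ` has the same
premises as `A_⊥` and its rule set is `Ã_⊥ \ {φ ⤳ ψ}`. -/
theorem undercutting_argument_prems_rules {α : Type} (S : Set (PropForm α))
    (D : Set (Rule α)) (Aφ rest : Arg α) (r : Rule α)
    (hbot : ∃ χ : PropForm α,
      IsArgFor S D (ArgPair.rule Aφ r :: rest) χ ∧ ∀ v : α → Bool, χ.eval v = false)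
    (hmin : ∀ p ∈ rest, ¬ RuleIn r p)
    (hnotin : r ∉ argRules Aφ) :
    argPrems (rest ++ Aφ) = argPrems (ArgPair.rule Aφ r :: rest) ∧
    argRules (rest ++ Aφ) = argRules (ArgPair.rule Aφ r :: rest) \ {r} :=
  undercutting_argument_prems_rules_general Aφ rest r hmin hnotin
end
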